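/- Let (T,F,μ) be a σ-finite measure space with μ(T) > 0, Y a reflexive real Banach space, and φ, ψ : Y → ℝ sequentially weakly lower semicontinuous with inf_{y} min{φ(y),ψ(y)}/(1+‖y‖^p) > -∞ for some p > 0. Assume φ has no global minimum, while for each λ > 0 the functional φ + λψ is coercive and has a unique global minimum. Then for each γ ∈ L^∞(T) ∩ L¹(T), γ ≥ 0, γ ≠ 0, and each r > inf_Y ψ, setting V = {u ∈ L^p(T,Y) : ∫_T γ(t)ψ(u(t))dμ ≤ r∫_T γ dμ}, one has inf_{u ∈ V} ∫_T γ(t)φ(u(t))dμ = (inf_{ψ⁻¹(r)} φ)·∫_T γ dμ. -/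

import Mathlib

open Filter Set MeasureTheory

/-- A functional is sequentially weakly lower semicontinuous. -/
def SeqWeaklyLSC {Y : Type*} [NormedAddCommGroup Y] [NormedSpace ℝ Y] (φ : Y → ℝ) : Prop :=
  ∀ (u : ℕ → Y) (y : Y),
    (∀ f : Y →L[ℝ] ℝ, Tendsto (fun n => f (u n)) atTop (nhds (f y))) →
    φ y ≤ liminf (fun n => φ (u n)) atTop

open TopologicalSpace NormedSpace
open scoped Classical

section Part1
variable {Y : Type*} [NormedAddCommGroup Y] [NormedSpace ℝ Y]

/-- Separation of a point from a closed submodule. -/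
lemma sep_closed_submodule (Z : Submodule ℝ Y) (hZ : IsClosed (Z : Set Y))
    {x : Y} (hx : x ∉ Z) :
    ∃ f : Y →L[ℝ] ℝ, (∀ z ∈ Z, f z = 0) ∧ f x ≠ 0 := by
  obtain ⟨f, u, hfs, hux⟩ := geometric_hahn_banach_closed_point Z.convex hZ hx
  have h0 : (0:ℝ) < u := by simpa using hfs 0 Z.zero_mem
  refine ⟨f, ?_, ?_⟩
  · intro z hz
    by_contra hfz
    have := hfs (((u + 1) / f z) • z) (Z.smul_mem _ hz)
    rw [_root_.map_smul, smul_eq_mul, div_mul_cancel₀ _ hfz] at this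
    linarith
  · intro h; rw [h] at hux; linarith

/-- A closed submodule of a reflexive space is reflexive. -/
lemma refl_closed_submodule (hrefl : Function.Surjective (inclusionInDoubleDual ℝ Y))
    (Z : Submodule ℝ Y) (hZ : IsClosed (Z : Set Y)) :
    Function.Surjective (inclusionInDoubleDual ℝ ↥Z) := by
  intro G
  -- restriction map `Dual Y → Dual Z`
  let ρ : StrongDual ℝ Y →L[ℝ] StrongDual ℝ ↥Z := (ContinuousLinearMap.compL ℝ ↥Z Y ℝ).flip Z.subtypeL
  have hρ : ∀ (f : StrongDual ℝ Y) (z : ↥Z), ρ f z = f z := fun f z => rfl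
  obtain ⟨x, hx⟩ := hrefl (G.comp ρ)
  have hx' : ∀ f : StrongDual ℝ Y, f x = G (ρ f) := by
    intro f
    have := congrArg (fun F => F f) hx
    simpa [NormedSpace.dual_def] using this
  have hxZ : x ∈ Z := by
    by_contra hxZ
    obtain ⟨f, hf0, hfx⟩ := sep_closed_submodule Z hZ hxZ
    have hρ0 : ρ f = 0 := by
      ext z; exact hf0 z z.2
    have h := hx' f
    rw [hρ0, map_zero] at h
    exact hfx h
  refine ⟨⟨x, hxZ⟩, ?_⟩
  ext g
  obtain ⟨f, hf, -⟩ := exists_extension_norm_eq Z g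
  have hfg : ρ f = g := by ext z; exact hf z
  have := hx' f
  rw [hfg] at this
  rw [NormedSpace.dual_def]
  rw [← this]
  exact (hf ⟨x, hxZ⟩).symm

end Part1

section Part1b
variable {X : Type*} [NormedAddCommGroup X] [NormedSpace ℝ X]

/-- If the dual of a normed space is separable, so is the space. -/
lemma sep_of_dual_sep (h : SeparableSpace (StrongDual ℝ X)) : SeparableSpace X := by
  obtain ⟨s, hs_count, hs_dense⟩ := exists_countable_dense (StrongDual ℝ X)
  have hch : ∀ f : StrongDual ℝ X, ∃ x : X, ‖x‖ ≤ 1 ∧ ‖f‖ / 2 ≤ f x := by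
    intro f
    rcases eq_or_ne f 0 with h0 | h0
    · exact ⟨0, by simp [h0]⟩
    · have hf : ‖f‖ / 2 < ‖f‖ := by
        have : (0:ℝ) < ‖f‖ := norm_pos_iff.2 h0
        linarith
      obtain ⟨x, hx1, hx2⟩ := f.exists_lt_apply_of_lt_opNorm hf
      rcases le_or_gt 0 (f x) with hfx | hfx
      · refine ⟨x, hx1.le, ?_⟩
        rw [Real.norm_eq_abs, abs_of_nonneg hfx] at hx2
        linarith
      · refine ⟨-x, by simpa using hx1.le, ?_⟩
        rw [Real.norm_eq_abs, abs_of_neg hfx] at hx2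
        rw [map_neg]
        linarith
  choose xf hxf1 hxf2 using hch
  set D := (Submodule.span ℝ (xf '' s)).topologicalClosure with hD
  have hDsep : IsSeparable (D : Set X) := by
    rw [Submodule.topologicalClosure_coe]
    exact ((hs_count.image xf).isSeparable.span).closure
  have hDtop : D = ⊤ := by
    by_contra hne
    obtain ⟨x, hx⟩ : ∃ x : X, x ∉ D := by
      by_contra hall
      push_neg at hall
      exact hne (Submodule.eq_top_iff'.2 hall)
    obtain ⟨f, hf0, hfx⟩ := sep_closed_submodule D ((Submodule.span ℝ (xf '' s)).isClosed_topologicalClosure) hx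
    have hfpos : (0:ℝ) < ‖f‖ := norm_pos_iff.2 (fun hf => hfx (by rw [hf]; rfl))
    obtain ⟨g, hgs, hgf⟩ : ∃ g ∈ s, dist f g < ‖f‖ / 4 :=
      Metric.mem_closure_iff.1 (hs_dense f) _ (by linarith)
    have hgnorm : 3 * ‖f‖ / 4 ≤ ‖g‖ := by
      have h1 : ‖f - g‖ < ‖f‖ / 4 := by rwa [← dist_eq_norm]
      have h2 : ‖f‖ ≤ ‖f - g‖ + ‖g‖ := by
        simpa using norm_add_le (f - g) g
      linarith
    have hgd : xf g ∈ D := by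
      apply Submodule.le_topologicalClosure
      exact Submodule.subset_span ⟨g, hgs, rfl⟩
    have h3 : g (xf g) = (g - f) (xf g) := by
      simp [hf0 (xf g) hgd]
    have h4 : ‖(g - f) (xf g)‖ ≤ ‖g - f‖ * ‖xf g‖ := (g - f).le_opNorm _
    have h5 : ‖g - f‖ < ‖f‖ / 4 := by rwa [norm_sub_rev, ← dist_eq_norm]
    have h6 : ‖g - f‖ * ‖xf g‖ ≤ ‖f‖ / 4 * 1 := by
      apply mul_le_mul (le_of_lt h5) (hxf1 g) (norm_nonneg _) (by linarith)
    have h7 : g (xf g) ≤ ‖f‖ / 4 := by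
      calc g (xf g) ≤ ‖(g - f) (xf g)‖ := by rw [← h3]; exact le_abs_self _
        _ ≤ ‖f‖ / 4 := by linarith
    have h8 : 3 * ‖f‖ / 8 ≤ g (xf g) := le_trans (by linarith) (hxf2 g)
    linarith
  rw [← isSeparable_univ_iff]
  have : (D : Set X) = univ := by rw [hDtop]; rfl
  rwa [this] at hDsep

end Part1b

section Part1c
variable {Y : Type*} [NormedAddCommGroup Y] [NormedSpace ℝ Y]

set_option maxHeartbeats 1000000 in
/-- Bounded sequences in a reflexive space have weakly convergent subsequences. -/
lemma weak_seq_compact (hrefl : Function.Surjective (inclusionInDoubleDual ℝ Y))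
    (y : ℕ → Y) (C : ℝ) (hC : ∀ n, ‖y n‖ ≤ C) :
    ∃ (z : Y) (k : ℕ → ℕ), StrictMono k ∧
      ∀ f : Y →L[ℝ] ℝ, Tendsto (fun n => f (y (k n))) atTop (nhds (f z)) := by
  have hC0 : 0 ≤ C := le_trans (norm_nonneg _) (hC 0)
  set Z := (Submodule.span ℝ (Set.range y)).topologicalClosure with hZdef
  have hZc : IsClosed (Z : Set Y) := Submodule.isClosed_topologicalClosure _
  have hZsep : IsSeparable (Z : Set Y) := by
    rw [hZdef, Submodule.topologicalClosure_coe]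
    exact ((countable_range y).isSeparable.span).closure
  haveI : SeparableSpace ↥Z := hZsep.separableSpace
  have hZrefl := refl_closed_submodule hrefl Z hZc
  haveI : SeparableSpace (StrongDual ℝ (StrongDual ℝ ↥Z)) :=
    hZrefl.denseRange.separableSpace (inclusionInDoubleDual ℝ ↥Z).continuous
  haveI : SeparableSpace (StrongDual ℝ ↥Z) := sep_of_dual_sep (X := StrongDual ℝ ↥Z) ‹_›
  obtain ⟨s, hs_count, hs_dense⟩ := exists_countable_dense (StrongDual ℝ ↥Z)
  obtain ⟨g, hgs⟩ := hs_count.exists_eq_range hs_dense.nonempty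
  have hmem : ∀ n, y n ∈ Z := fun n =>
    Submodule.le_topologicalClosure _ (Submodule.subset_span (mem_range_self n))
  set w : ℕ → ↥Z := fun n => ⟨y n, hmem n⟩ with hw
  have hwnorm : ∀ n, ‖w n‖ ≤ C := hC
  set K : Set (ℕ → ℝ) := Set.pi univ (fun i => Icc (-(‖g i‖ * C)) (‖g i‖ * C)) with hK
  have hKc : IsCompact K := isCompact_univ_pi (fun i => isCompact_Icc)
  have hmemK : ∀ n, (fun i => g i (w n)) ∈ K := by
    intro n i _
    have habs : |g i (w n)| ≤ ‖g i‖ * C := by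
      calc |g i (w n)| ≤ ‖g i‖ * ‖w n‖ := (g i).le_opNorm (w n)
        _ ≤ ‖g i‖ * C := by nlinarith [norm_nonneg (g i), hwnorm n]
    exact abs_le.1 habs
  obtain ⟨ℓ, -, k, hk, hkt⟩ := hKc.isSeqCompact hmemK
  have hcomp : ∀ i, Tendsto (fun n => g i (w (k n))) atTop (nhds (ℓ i)) :=
    fun i => (tendsto_pi_nhds.1 hkt) i
  have hconv : ∀ F : StrongDual ℝ ↥Z, ∃ LF, Tendsto (fun n => F (w (k n))) atTop (nhds LF) := by
    intro F
    have hcauchy : CauchySeq (fun n => F (w (k n))) := by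
      rw [Metric.cauchySeq_iff]
      intro ε hε
      obtain ⟨G, hGs, hGF⟩ : ∃ G ∈ s, dist F G < ε / (3 * (C + 1)) :=
        Metric.mem_closure_iff.1 (hs_dense F) _ (by positivity)
      obtain ⟨i, rfl⟩ : ∃ i, g i = G := by
        rw [hgs] at hGs; exact hGs
      have hci : CauchySeq (fun n => g i (w (k n))) := (hcomp i).cauchySeq
      obtain ⟨N, hN⟩ := Metric.cauchySeq_iff.1 hci (ε / 3) (by linarith)
      refine ⟨N, fun m hm n hn => ?_⟩
      have hdistF : ∀ j, |F (w (k j)) - g i (w (k j))| ≤ ε / (3 * (C + 1)) * C := by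
        intro j
        have h1 : |(F - g i) (w (k j))| ≤ ‖F - g i‖ * ‖w (k j)‖ := (F - g i).le_opNorm _
        have h2 : ‖F - g i‖ * ‖w (k j)‖ ≤ ‖F - g i‖ * C := by
          nlinarith [norm_nonneg (F - g i), hwnorm (k j)]
        have h3 : ‖F - g i‖ < ε / (3 * (C + 1)) := lt_of_eq_of_lt (dist_eq_norm F (g i)).symm hGF
        have h4 : ‖F - g i‖ * C ≤ ε / (3 * (C + 1)) * C := by nlinarith
        have h5 : (F - g i) (w (k j)) = F (w (k j)) - g i (w (k j)) := rfl
        rw [h5] at h1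
        linarith
      have hsmall : ε / (3 * (C + 1)) * C < ε / 3 := by
        rw [div_mul_eq_mul_div, div_lt_div_iff₀ (by positivity) (by norm_num)]
        nlinarith
      have hmid : |g i (w (k m)) - g i (w (k n))| < ε / 3 := by
        have := hN m hm n hn
        rwa [Real.dist_eq] at this
      rw [Real.dist_eq]
      have e1 := hdistF m
      have e2 := hdistF n
      have : |F (w (k m)) - F (w (k n))| ≤
          |F (w (k m)) - g i (w (k m))| + |g i (w (k m)) - g i (w (k n))|
            + |g i (w (k n)) - F (w (k n))| := by
        have := abs_sub_le (F (w (k m))) (g i (w (k m))) (F (w (k n)))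
        have h2 := abs_sub_le (g i (w (k m))) (g i (w (k n))) (F (w (k n)))
        linarith
      have e3 : |g i (w (k n)) - F (w (k n))| ≤ ε / (3 * (C + 1)) * C := by
        rw [abs_sub_comm]; exact hdistF n
      linarith
    exact cauchySeq_tendsto_of_complete hcauchy
  choose LF hLF using hconv
  set ρ : StrongDual ℝ Y →L[ℝ] StrongDual ℝ ↥Z := (ContinuousLinearMap.compL ℝ ↥Z Y ℝ).flip Z.subtypeL with hρ
  have hρapp : ∀ (f : StrongDual ℝ Y) (v : ↥Z), ρ f v = f v := fun f v => rfl
  have hadd : ∀ f₁ f₂ : StrongDual ℝ Y, LF (ρ (f₁ + f₂)) = LF (ρ f₁) + LF (ρ f₂) := by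
    intro f₁ f₂
    have h1 := (hLF (ρ f₁)).add (hLF (ρ f₂))
    have h2 := hLF (ρ (f₁ + f₂))
    have heq : (fun n => ρ (f₁ + f₂) (w (k n)))
        = fun n => ρ f₁ (w (k n)) + ρ f₂ (w (k n)) := by
      funext n; simp [hρapp]
    rw [heq] at h2
    exact tendsto_nhds_unique h2 h1
  have hsmul : ∀ (a : ℝ) (f : StrongDual ℝ Y), LF (ρ (a • f)) = a • LF (ρ f) := by
    intro a f
    have h1 := (hLF (ρ f)).const_mul a
    have h2 := hLF (ρ (a • f))
    have heq : (fun n => ρ (a • f) (w (k n))) = fun n => a * ρ f (w (k n)) := by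
      funext n; simp [hρapp]
    rw [heq] at h2
    simpa [smul_eq_mul] using tendsto_nhds_unique h2 h1
  have hbound : ∀ f : StrongDual ℝ Y, ‖LF (ρ f)‖ ≤ C * ‖f‖ := by
    intro f
    refine le_of_tendsto' (hLF (ρ f)).norm (fun n => ?_)
    have h1 : ‖ρ f (w (k n))‖ ≤ ‖f‖ * ‖y (k n)‖ := by
      rw [hρapp]; exact f.le_opNorm _
    have h2 : ‖f‖ * ‖y (k n)‖ ≤ ‖f‖ * C := by nlinarith [norm_nonneg f, hC (k n)]
    calc ‖ρ f (w (k n))‖ ≤ ‖f‖ * C := le_trans h1 h2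
      _ = C * ‖f‖ := mul_comm _ _
  set F : StrongDual ℝ (StrongDual ℝ Y) := LinearMap.mkContinuous
    { toFun := fun f => LF (ρ f), map_add' := hadd, map_smul' := hsmul } C hbound with hF
  obtain ⟨z, hz⟩ := hrefl F
  refine ⟨z, k, hk, fun f => ?_⟩
  have hfz : f z = LF (ρ f) := by
    have h := congrArg (fun Φ : StrongDual ℝ (StrongDual ℝ Y) => Φ f) hz
    simpa [NormedSpace.dual_def, hF, LinearMap.mkContinuous] using h
  have heq : (fun n => f (y (k n))) = fun n => ρ f (w (k n)) := rfl
  rw [heq, hfz]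
  exact hLF (ρ f)

end Part1c

section Part2
variable {Y : Type*} [NormedAddCommGroup Y] [NormedSpace ℝ Y]

lemma liminf_le_of_tendsto_le {u v : ℕ → ℝ} {a m : ℝ} (hb : ∀ n, m ≤ u n)
    (hle : ∀ n, u n ≤ v n) (hv : Tendsto v atTop (nhds a)) : liminf u atTop ≤ a := by
  have hbdd : IsBoundedUnder (· ≥ ·) atTop u := isBoundedUnder_of ⟨m, fun n => hb n⟩
  by_contra hcon
  push_neg at hcon
  set ε := (liminf u atTop - a) / 2 with hε
  have hεpos : 0 < ε := by rw [hε]; linarith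
  have hev : ∀ᶠ n in atTop, u n ≤ a + ε := by
    filter_upwards [hv.eventually (gt_mem_nhds (lt_add_of_pos_right a hεpos))] with n hn
    exact le_trans (hle n) hn.le
  have := liminf_le_of_frequently_le hev.frequently hbdd
  rw [hε] at this
  linarith

set_option maxHeartbeats 1000000 in
theorem thmA (hrefl : Function.Surjective (inclusionInDoubleDual ℝ Y))
    (φ ψ : Y → ℝ) (hφ : SeqWeaklyLSC φ) (hψ : SeqWeaklyLSC ψ)
    (p c : ℝ) (hp : 0 < p) (hc : 0 < c)
    (hbound : ∀ y : Y, -c * (1 + ‖y‖ ^ p) ≤ min (φ y) (ψ y))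
    (hnomin : ¬ ∃ y : Y, ∀ z : Y, φ y ≤ φ z)
    (hcoer : ∀ lam : ℝ, 0 < lam →
      ∀ M : ℝ, ∃ R : ℝ, ∀ y : Y, R ≤ ‖y‖ → M ≤ φ y + lam * ψ y)
    (huniq : ∀ lam : ℝ, 0 < lam →
      ∃! y : Y, ∀ z : Y, φ y + lam * ψ y ≤ φ z + lam * ψ z)
    (r : ℝ) (hr : ∃ y : Y, ψ y < r) :
    ∃ (lam : ℝ) (yhat : Y), 0 < lam ∧ ψ yhat = r ∧
      ∀ z : Y, φ yhat + lam * ψ yhat ≤ φ z + lam * ψ z := by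
  classical
  obtain ⟨y₀, hy₀⟩ := hr
  have hm : ∀ lam : ℝ, 0 < lam → ∃ y : Y,
      (∀ z : Y, φ y + lam * ψ y ≤ φ z + lam * ψ z) ∧
      ∀ y' : Y, (∀ z : Y, φ y' + lam * ψ y' ≤ φ z + lam * ψ z) → y' = y := by
    intro lam hlam
    obtain ⟨y, hy, hu⟩ := huniq lam hlam
    exact ⟨y, hy, hu⟩
  choose! ym hym hymu using hm
  have hφlb : ∀ y : Y, -c * (1 + ‖y‖ ^ p) ≤ φ y :=
    fun y => le_trans (hbound y) (min_le_left _ _)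
  have hψlb : ∀ y : Y, -c * (1 + ‖y‖ ^ p) ≤ ψ y :=
    fun y => le_trans (hbound y) (min_le_right _ _)
  have hnormbd : ∀ lam : ℝ, 0 < lam → ∀ K : ℝ, ∃ B : ℝ, 0 ≤ B ∧ ∀ y : Y,
      φ y + lam * ψ y ≤ K → ‖y‖ ≤ B := by
    intro lam hlam K
    obtain ⟨R, hR⟩ := hcoer lam hlam (K + 1)
    refine ⟨max R 0, le_max_right _ _, fun y hy => ?_⟩
    have hyR : ‖y‖ < R := by
      by_contra h
      push_neg at h
      have := hR y h
      linarith
    exact le_max_of_le_left hyR.le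
  have hlb : ∀ (B : ℝ) (y : Y), ‖y‖ ≤ B →
      -c * (1 + B ^ p) ≤ φ y ∧ -c * (1 + B ^ p) ≤ ψ y := by
    intro B y hyB
    have h1 : ‖y‖ ^ p ≤ B ^ p := Real.rpow_le_rpow (norm_nonneg _) hyB hp.le
    have h2 : -c * (1 + B ^ p) ≤ -c * (1 + ‖y‖ ^ p) := by nlinarith
    exact ⟨le_trans h2 (hφlb y), le_trans h2 (hψlb y)⟩
  have hmono : ∀ a b : ℝ, 0 < a → a ≤ b → ψ (ym b) ≤ ψ (ym a) := by
    intro a b ha hab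
    rcases eq_or_lt_of_le hab with rfl | h
    · exact le_refl _
    · have h1 := hym a ha (ym b)
      have h2 := hym b (lt_trans ha h) (ym a)
      nlinarith
  -- for some lam, ψ (ym lam) < r
  have hbig : ∃ l2 : ℝ, 0 < l2 ∧ ψ (ym l2) < r := by
    by_contra hcon
    push_neg at hcon
    obtain ⟨B, hB0, hB⟩ := hnormbd 1 one_pos (φ y₀ + ψ y₀)
    have hkey : ∀ n : ℕ, ((n : ℝ) + 1) * (r - ψ y₀) ≤ φ y₀ + c * (1 + B ^ p) := by
      intro n
      set l : ℝ := (n : ℝ) + 1 with hl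
      have hlpos : 0 < l := by positivity
      have hl1 : 1 ≤ l := by
        rw [hl]; have : (0:ℝ) ≤ (n:ℝ) := Nat.cast_nonneg n; linarith
      have hmin := hym l hlpos y₀
      have hψge : r ≤ ψ (ym l) := hcon l hlpos
      have hψy₀ : ψ y₀ ≤ ψ (ym l) := le_trans hy₀.le hψge
      have hKb : φ (ym l) + 1 * ψ (ym l) ≤ φ y₀ + ψ y₀ := by nlinarith
      have hnorm := hB _ hKb
      have hφl := (hlb B _ hnorm).1
      have e1 : l * (r - ψ y₀) ≤ l * (ψ (ym l) - ψ y₀) :=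
        mul_le_mul_of_nonneg_left (by linarith) hlpos.le
      nlinarith [e1]
    obtain ⟨n, hn⟩ := exists_nat_gt ((φ y₀ + c * (1 + B ^ p)) / (r - ψ y₀))
    have h1 := hkey n
    have hrψ : 0 < r - ψ y₀ := by linarith
    rw [div_lt_iff₀ hrψ] at hn
    nlinarith [hrψ]
  -- for some lam, r < ψ (ym lam)
  have hsmall : ∃ l1 : ℝ, 0 < l1 ∧ r < ψ (ym l1) := by
    by_contra hcon
    push_neg at hcon
    set lam : ℕ → ℝ := fun n => 1 / ((n : ℝ) + 1) with hlamdef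
    have hlampos : ∀ n, 0 < lam n := fun n => by positivity
    have hlam1 : ∀ n, lam n ≤ 1 := by
      intro n
      rw [hlamdef]
      rw [div_le_one (by positivity)]
      have : (0:ℝ) ≤ (n:ℝ) := Nat.cast_nonneg n
      linarith
    set yn : ℕ → Y := fun n => ym (lam n) with hyndef
    have hψle : ∀ n, ψ (yn n) ≤ r := fun n => hcon _ (hlampos n)
    have hminseq : ∀ (n : ℕ) (z : Y), φ (yn n) + lam n * ψ (yn n) ≤ φ z + lam n * ψ z :=
      fun n => hym _ (hlampos n)
    have hKb : ∀ n, φ (yn n) + 1 * ψ (yn n) ≤ φ y₀ + |ψ y₀| + |r| := by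
      intro n
      have h1 := hminseq n y₀
      have h2 : lam n * ψ y₀ ≤ |ψ y₀| := by
        have h3 : lam n * ψ y₀ ≤ lam n * |ψ y₀| :=
          mul_le_mul_of_nonneg_left (le_abs_self _) (hlampos n).le
        nlinarith [hlam1 n, hlampos n, abs_nonneg (ψ y₀)]
      have h4 : (1 - lam n) * ψ (yn n) ≤ (1 - lam n) * r :=
        mul_le_mul_of_nonneg_left (hψle n) (by linarith [hlam1 n])
      have h5 : (1 - lam n) * r ≤ |r| := by
        nlinarith [abs_nonneg r, le_abs_self r, hlampos n, hlam1 n]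
      nlinarith
    obtain ⟨B, hB0, hB⟩ := hnormbd 1 one_pos (φ y₀ + |ψ y₀| + |r|)
    have hnorm : ∀ n, ‖yn n‖ ≤ B := fun n => hB _ (hKb n)
    have hψlb' : ∀ n, -c * (1 + B ^ p) ≤ ψ (yn n) := fun n => (hlb B _ (hnorm n)).2
    have hφlb' : ∀ n, -c * (1 + B ^ p) ≤ φ (yn n) := fun n => (hlb B _ (hnorm n)).1
    have hlamtend : Tendsto lam atTop (nhds 0) := tendsto_one_div_add_atTop_nhds_zero_nat
    have hcBp : 0 ≤ c * (1 + B ^ p) := by positivity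
    have hψabs : ∀ n, |ψ (yn n)| ≤ c * (1 + B ^ p) + |r| := by
      intro n
      rw [abs_le]
      constructor
      · have := hψlb' n; have := abs_nonneg r; linarith
      · have := hψle n; have := le_abs_self r; linarith
    have hsq : Tendsto (fun n => lam n * ψ (yn n)) atTop (nhds 0) := by
      have hgt : Tendsto (fun n => lam n * (c * (1 + B ^ p) + |r|)) atTop (nhds 0) := by
        have := hlamtend.mul_const (c * (1 + B ^ p) + |r|)
        rwa [zero_mul] at this
      refine squeeze_zero_norm (fun n => ?_) hgt
      rw [Real.norm_eq_abs, abs_mul, abs_of_pos (hlampos n)]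
      exact mul_le_mul_of_nonneg_left (hψabs n) (hlampos n).le
    obtain ⟨z, k, hk, hweak⟩ := weak_seq_compact hrefl yn B hnorm
    apply hnomin
    refine ⟨z, fun w => ?_⟩
    have h1 := hφ (fun n => yn (k n)) z hweak
    have hvle : ∀ n, φ (yn (k n)) ≤
        φ w + (lam (k n) * ψ w - lam (k n) * ψ (yn (k n))) := by
      intro n; have := hminseq (k n) w; linarith
    have hrhs : Tendsto (fun n => φ w + (lam (k n) * ψ w - lam (k n) * ψ (yn (k n))))
        atTop (nhds (φ w)) := by
      have hlk : Tendsto (fun n => lam (k n)) atTop (nhds 0) :=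
        hlamtend.comp hk.tendsto_atTop
      have h2 : Tendsto (fun n => lam (k n) * ψ (yn (k n))) atTop (nhds 0) :=
        hsq.comp hk.tendsto_atTop
      have h3 := ((hlk.mul_const (ψ w)).sub h2).const_add (φ w)
      simpa using h3
    have h2 : liminf (fun n => φ (yn (k n))) atTop ≤ φ w :=
      liminf_le_of_tendsto_le (fun n => hφlb' (k n)) hvle hrhs
    exact le_trans h1 h2
  -- the supremum
  obtain ⟨l1, hl1pos, hl1⟩ := hsmall
  obtain ⟨l2, hl2pos, hl2⟩ := hbig
  set A := {l : ℝ | 0 < l ∧ r < ψ (ym l)} with hAdef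
  have hAne : A.Nonempty := ⟨l1, hl1pos, hl1⟩
  have hAbdd : BddAbove A := by
    refine ⟨l2, fun a ha => ?_⟩
    by_contra hcc
    push_neg at hcc
    have := hmono l2 a hl2pos hcc.le
    have := ha.2
    linarith
  set ls := sSup A with hls
  have hl1A : l1 ∈ A := ⟨hl1pos, hl1⟩
  have hlspos : 0 < ls := lt_of_lt_of_le hl1pos (le_csSup hAbdd hl1A)
  set yhat := ym ls with hyhat
  have hminhat := hym ls hlspos
  -- minimizing sequence machinery
  have hkey : ∀ (l : ℕ → ℝ) (m M : ℝ), (∀ n, ls / 2 ≤ l n) → (∀ n, l n ≤ 2 * ls) →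
      Tendsto l atTop (nhds ls) → (∀ n, m ≤ ψ (ym (l n))) → (∀ n, ψ (ym (l n)) ≤ M) →
      ∃ k : ℕ → ℕ, StrictMono k ∧
        Tendsto (fun n => ψ (ym (l (k n)))) atTop (nhds (ψ yhat)) := by
    intro l m M hlow hhigh hltend hml hMl
    have hlpos : ∀ n, 0 < l n := fun n => lt_of_lt_of_le (by linarith) (hlow n)
    set yn : ℕ → Y := fun n => ym (l n) with hyndef
    have hminseq : ∀ (n : ℕ) (z : Y), φ (yn n) + l n * ψ (yn n) ≤ φ z + l n * ψ z :=
      fun n => hym _ (hlpos n)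
    have habs : ∀ n, |ψ (yn n)| ≤ |m| + |M| := by
      intro n
      rw [abs_le]
      constructor
      · have h1 := hml n; have h2 := neg_abs_le m; have h3 := abs_nonneg M; linarith
      · have h1 := hMl n; have h2 := le_abs_self M; have h3 := abs_nonneg m; linarith
    set Q : ℝ := |φ y₀| + 2 * ls * |ψ y₀| + 2 * ls * (|m| + |M|) with hQ
    have hKb : ∀ n, φ (yn n) + ls / 2 * ψ (yn n) ≤ Q := by
      intro n
      have h1 := hminseq n y₀
      have h2 : l n * ψ y₀ ≤ 2 * ls * |ψ y₀| := by
        have h2a := le_abs_self (ψ y₀)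
        nlinarith [hlpos n, hhigh n, abs_nonneg (ψ y₀), hlspos]
      have h3 : -((l n - ls / 2) * ψ (yn n)) ≤ 2 * ls * (|m| + |M|) := by
        have hfac : 0 ≤ l n - ls / 2 := by linarith [hlow n]
        have hfac2 : l n - ls / 2 ≤ 2 * ls := by linarith [hhigh n, hlspos]
        have h3a := neg_abs_le (ψ (yn n))
        nlinarith [habs n, abs_nonneg (ψ (yn n))]
      have h4 : φ y₀ ≤ |φ y₀| := le_abs_self _
      nlinarith
    obtain ⟨B, hB0, hB⟩ := hnormbd (ls / 2) (by linarith) Q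
    have hnorm : ∀ n, ‖yn n‖ ≤ B := fun n => hB _ (hKb n)
    have hφlb' : ∀ n, -c * (1 + B ^ p) ≤ φ (yn n) := fun n => (hlb B _ (hnorm n)).1
    have hφub' : ∀ n, φ (yn n) ≤ Q + 2 * ls * (|m| + |M|) := by
      intro n
      have h1 := hminseq n y₀
      have h2 : l n * ψ y₀ ≤ 2 * ls * |ψ y₀| := by
        have h2a := le_abs_self (ψ y₀)
        nlinarith [hlpos n, hhigh n, abs_nonneg (ψ y₀), hlspos]
      have h3 : -(l n * ψ (yn n)) ≤ 2 * ls * (|m| + |M|) := by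
        have h3a := neg_abs_le (ψ (yn n))
        nlinarith [habs n, abs_nonneg (ψ (yn n)), hlpos n, hhigh n, hlspos]
      have h4 : φ y₀ ≤ |φ y₀| := le_abs_self _
      have h5 : 0 ≤ 2 * ls * (|m| + |M|) := by positivity
      rw [hQ]
      nlinarith
    set gstar := φ yhat + ls * ψ yhat with hgstar
    have hvlb : ∀ n, gstar ≤ φ (yn n) + ls * ψ (yn n) := fun n => hminhat (yn n)
    have hvub : ∀ n, φ (yn n) + ls * ψ (yn n) ≤
        φ yhat + l n * ψ yhat + (ls - l n) * ψ (yn n) := by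
      intro n
      have := hminseq n yhat
      nlinarith
    have hrhs : Tendsto (fun n => φ yhat + l n * ψ yhat + (ls - l n) * ψ (yn n))
        atTop (nhds gstar) := by
      have h1 : Tendsto (fun n => (ls - l n) * ψ (yn n)) atTop (nhds 0) := by
        have h2 : Tendsto (fun n => ls - l n) atTop (nhds 0) := by
          simpa using (tendsto_const_nhds (x := ls)).sub hltend
        have hgt : Tendsto (fun n => |ls - l n| * (|m| + |M|)) atTop (nhds 0) := by
          have := h2.abs.mul_const (|m| + |M|)
          rwa [abs_zero, zero_mul] at this
        refine squeeze_zero_norm (fun n => ?_) hgt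
        rw [Real.norm_eq_abs, abs_mul]
        exact mul_le_mul_of_nonneg_left (habs n) (abs_nonneg _)
      have h3 : Tendsto (fun n => φ yhat + l n * ψ yhat)
          atTop (nhds (φ yhat + ls * ψ yhat)) :=
        tendsto_const_nhds.add (hltend.mul_const _)
      have h4 := h3.add h1
      rw [add_zero] at h4
      exact h4
    have hvtend : Tendsto (fun n => φ (yn n) + ls * ψ (yn n)) atTop (nhds gstar) :=
      tendsto_of_tendsto_of_tendsto_of_le_of_le tendsto_const_nhds hrhs hvlb hvub
    obtain ⟨z, k1, hk1, hweak1⟩ := weak_seq_compact hrefl yn B hnorm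
    have hφbdd : ∀ n, φ (yn (k1 n)) ∈ Icc (-c * (1 + B ^ p)) (Q + 2 * ls * (|m| + |M|)) :=
      fun n => ⟨hφlb' _, hφub' _⟩
    obtain ⟨a, -, k2, hk2, hφtend⟩ := tendsto_subseq_of_bounded (Metric.isBounded_Icc _ _) hφbdd
    have hψbdd : ∀ n, ψ (yn (k1 (k2 n))) ∈ Icc m M := fun n => ⟨hml _, hMl _⟩
    obtain ⟨b, -, k3, hk3, hψtend⟩ := tendsto_subseq_of_bounded (Metric.isBounded_Icc _ _) hψbdd
    set k : ℕ → ℕ := fun n => k1 (k2 (k3 n)) with hkdef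
    have hkmono : StrictMono k := hk1.comp (hk2.comp hk3)
    have hφt : Tendsto (fun n => φ (yn (k n))) atTop (nhds a) := by
      have := hφtend.comp hk3.tendsto_atTop
      simpa [Function.comp_def] using this
    have hψt : Tendsto (fun n => ψ (yn (k n))) atTop (nhds b) := by
      simpa [Function.comp_def] using hψtend
    have hweak : ∀ f : Y →L[ℝ] ℝ, Tendsto (fun n => f (yn (k n))) atTop (nhds (f z)) := by
      intro f
      have := (hweak1 f).comp ((hk2.comp hk3).tendsto_atTop)
      simpa [Function.comp_def] using this
    have hvt : Tendsto (fun n => φ (yn (k n)) + ls * ψ (yn (k n))) atTop (nhds gstar) := by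
      have := hvtend.comp hkmono.tendsto_atTop
      simpa [Function.comp_def] using this
    have hab : a + ls * b = gstar :=
      tendsto_nhds_unique (hφt.add (hψt.const_mul ls)) hvt
    have hφz : φ z ≤ a := by
      have := hφ (fun n => yn (k n)) z hweak
      rwa [hφt.liminf_eq] at this
    have hψz : ψ z ≤ b := by
      have := hψ (fun n => yn (k n)) z hweak
      rwa [hψt.liminf_eq] at this
    have hzmin : ∀ w : Y, φ z + ls * ψ z ≤ φ w + ls * ψ w := by
      intro w
      have h1 : φ z + ls * ψ z ≤ a + ls * b := by nlinarith
      rw [hab] at h1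
      exact le_trans h1 (hminhat w)
    have hzeq : z = yhat := hymu ls hlspos z hzmin
    have hψzb : ψ z = b := by
      have h1 := hminhat z
      refine le_antisymm hψz ?_
      nlinarith
    refine ⟨k, hkmono, ?_⟩
    rw [← hzeq, hψzb]
    exact hψt
  have he2 : Tendsto (fun n : ℕ => 1 / ((n : ℝ) + 2)) atTop (nhds 0) := by
    have h2 : Tendsto (fun n : ℕ => (n : ℝ) + 2) atTop atTop :=
      tendsto_atTop_add_const_right _ 2 tendsto_natCast_atTop_atTop
    simpa [one_div, Function.comp_def] using tendsto_inv_atTop_zero.comp h2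
  have hfrac : ∀ n : ℕ, 1 / ((n : ℝ) + 2) ≤ 1 / 2 := by
    intro n
    have hn0 : (0:ℝ) ≤ (n:ℝ) := Nat.cast_nonneg n
    rw [div_le_div_iff₀ (by positivity) (by norm_num)]
    linarith
  have hfracpos : ∀ n : ℕ, 0 < 1 / ((n : ℝ) + 2) := fun n => by positivity
  have hleft : r ≤ ψ yhat := by
    set l : ℕ → ℝ := fun n => ls * (1 - 1 / ((n : ℝ) + 2)) with hldef
    have hlow : ∀ n, ls / 2 ≤ l n := by
      intro n; have := hfrac n; rw [hldef]; nlinarith [hlspos]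
    have hhigh : ∀ n, l n ≤ 2 * ls := by
      intro n; have := hfracpos n; rw [hldef]; nlinarith [hlspos]
    have hlt : ∀ n, l n < ls := by
      intro n; have := hfracpos n; rw [hldef]; nlinarith [hlspos]
    have hpos : ∀ n, 0 < l n := fun n => lt_of_lt_of_le (by linarith) (hlow n)
    have hltend : Tendsto l atTop (nhds ls) := by
      have h1 : Tendsto (fun n : ℕ => 1 - 1 / ((n : ℝ) + 2)) atTop (nhds 1) := by
        simpa using (tendsto_const_nhds (x := (1:ℝ))).sub he2
      have h2 := h1.const_mul ls
      rw [mul_one] at h2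
      exact h2
    have hrl : ∀ n, r < ψ (ym (l n)) := by
      intro n
      obtain ⟨aa, haA, hlta⟩ := exists_lt_of_lt_csSup hAne (hlt n)
      exact lt_of_lt_of_le haA.2 (hmono (l n) aa (hpos n) hlta.le)
    have hub : ∀ n, ψ (ym (l n)) ≤ ψ (ym (ls / 2)) :=
      fun n => hmono (ls / 2) (l n) (by linarith) (hlow n)
    obtain ⟨k, hkm, htend⟩ := hkey l r (ψ (ym (ls / 2))) hlow hhigh hltend
      (fun n => (hrl n).le) hub
    exact ge_of_tendsto htend (Eventually.of_forall fun n => (hrl (k n)).le)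
  have hright : ψ yhat ≤ r := by
    set l : ℕ → ℝ := fun n => ls * (1 + 1 / ((n : ℝ) + 2)) with hldef
    have hlow : ∀ n, ls / 2 ≤ l n := by
      intro n; have := hfracpos n; rw [hldef]; nlinarith [hlspos]
    have hhigh : ∀ n, l n ≤ 2 * ls := by
      intro n; have := hfrac n; have := hfracpos n; rw [hldef]; nlinarith [hlspos]
    have hgt : ∀ n, ls < l n := by
      intro n; have := hfracpos n; rw [hldef]; nlinarith [hlspos]
    have hpos : ∀ n, 0 < l n := fun n => lt_trans hlspos (hgt n)
    have hltend : Tendsto l atTop (nhds ls) := by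
      have h1 : Tendsto (fun n : ℕ => 1 + 1 / ((n : ℝ) + 2)) atTop (nhds 1) := by
        simpa using (tendsto_const_nhds (x := (1:ℝ))).add he2
      have h2 := h1.const_mul ls
      rw [mul_one] at h2
      exact h2
    have hψler : ∀ n, ψ (ym (l n)) ≤ r := by
      intro n
      by_contra hcc
      push_neg at hcc
      have hmem : l n ∈ A := ⟨hpos n, hcc⟩
      have := le_csSup hAbdd hmem
      linarith [hgt n]
    have hlbψ : ∀ n, ψ (ym (2 * ls)) ≤ ψ (ym (l n)) :=
      fun n => hmono (l n) (2 * ls) (hpos n) (hhigh n)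
    obtain ⟨k, hkm, htend⟩ := hkey l (ψ (ym (2 * ls))) r hlow hhigh hltend hlbψ hψler
    exact le_of_tendsto htend (Eventually.of_forall fun n => hψler (k n))
  exact ⟨ls, yhat, hlspos, le_antisymm hright hleft, hminhat⟩

end Part2

lemma helper_int {T : Type*} [MeasurableSpace T] {μ : Measure T}
    (γ : T → ℝ) (hγ1 : Integrable γ μ)
    {P Q : Set T} [DecidablePred (· ∈ P)] [DecidablePred (· ∈ Q)]
    (hP : MeasurableSet P) (hQ : MeasurableSet Q) (hPQ : Disjoint P Q)
    (a b d : ℝ) :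
    Integrable (fun t => γ t * (if t ∈ P then a else if t ∈ Q then b else d)) μ ∧
    ∫ t, γ t * (if t ∈ P then a else if t ∈ Q then b else d) ∂μ
      = d * ∫ t, γ t ∂μ + (a - d) * ∫ t in P, γ t ∂μ + (b - d) * ∫ t in Q, γ t ∂μ := by
  classical
  have heq : (fun t => γ t * (if t ∈ P then a else if t ∈ Q then b else d))
      = fun t => d * γ t + ((a - d) * P.indicator γ t + (b - d) * Q.indicator γ t) := by
    funext t
    by_cases htP : t ∈ P
    · have htQ : t ∉ Q := Set.disjoint_left.1 hPQ htP
      rw [Set.indicator_of_mem htP, Set.indicator_of_notMem htQ, if_pos htP]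
      ring
    · by_cases htQ : t ∈ Q
      · rw [Set.indicator_of_notMem htP, Set.indicator_of_mem htQ, if_neg htP, if_pos htQ]
        ring
      · rw [Set.indicator_of_notMem htP, Set.indicator_of_notMem htQ, if_neg htP, if_neg htQ]
        ring
  have hiP : Integrable (P.indicator γ) μ := hγ1.indicator hP
  have hiQ : Integrable (Q.indicator γ) μ := hγ1.indicator hQ
  have hg2 : Integrable (fun t => (a - d) * P.indicator γ t + (b - d) * Q.indicator γ t) μ := by
    exact (hiP.const_mul (a - d)).add (hiQ.const_mul (b - d))
  have hg1 : Integrable (fun t => d * γ t) μ := hγ1.const_mul d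
  have hgP : Integrable (fun t => (a - d) * P.indicator γ t) μ := hiP.const_mul (a - d)
  have hgQ : Integrable (fun t => (b - d) * Q.indicator γ t) μ := hiQ.const_mul (b - d)
  rw [heq]
  refine ⟨by exact hg1.add hg2, ?_⟩
  rw [integral_add hg1 hg2, integral_add hgP hgQ,
      integral_const_mul, integral_const_mul, integral_const_mul,
      integral_indicator hP, integral_indicator hQ]
  ring

set_option maxHeartbeats 1000000 in
theorem stmt2 {T : Type*} [MeasurableSpace T] {μ : Measure T} [SigmaFinite μ]
    (hT : 0 < μ Set.univ)
    {Y : Type*} [NormedAddCommGroup Y] [NormedSpace ℝ Y] [CompleteSpace Y]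
    (hrefl : Function.Surjective (NormedSpace.inclusionInDoubleDual ℝ Y))
    (φ ψ : Y → ℝ) (hφ : SeqWeaklyLSC φ) (hψ : SeqWeaklyLSC ψ)
    (p c : ℝ) (hp : 0 < p) (hc : 0 < c)
    (hbound : ∀ y : Y, -c * (1 + ‖y‖ ^ p) ≤ min (φ y) (ψ y))
    (hnomin : ¬ ∃ y : Y, ∀ z : Y, φ y ≤ φ z)
    (hcoer : ∀ lam : ℝ, 0 < lam →
      ∀ M : ℝ, ∃ R : ℝ, ∀ y : Y, R ≤ ‖y‖ → M ≤ φ y + lam * ψ y)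
    (huniq : ∀ lam : ℝ, 0 < lam →
      ∃! y : Y, ∀ z : Y, φ y + lam * ψ y ≤ φ z + lam * ψ z)
    (γ : T → ℝ) (hγtop : MemLp γ ⊤ μ) (hγ1 : Integrable γ μ)
    (hγ0 : 0 ≤ γ) (hγne : ¬ γ =ᵐ[μ] 0)
    (r : ℝ) (hr : ∃ y : Y, ψ y < r) :
    sInf {x : ℝ | ∃ u : T → Y, AEStronglyMeasurable u μ ∧
        Integrable (fun t => ‖u t‖ ^ p) μ ∧
        Integrable (fun t => γ t * ψ (u t)) μ ∧
        (∫ t, γ t * ψ (u t) ∂μ) ≤ r * ∫ t, γ t ∂μ ∧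
        Integrable (fun t => γ t * φ (u t)) μ ∧
        x = ∫ t, γ t * φ (u t) ∂μ} =
      sInf (φ '' {y : Y | ψ y = r}) * ∫ t, γ t ∂μ := by
  classical
  obtain ⟨lam, yhat, hlam, hψhat, hmin⟩ :=
    thmA hrefl φ ψ hφ hψ p c hp hc hbound hnomin hcoer huniq r hr
  obtain ⟨y₀, hy₀⟩ := hr
  set SS := {x : ℝ | ∃ u : T → Y, AEStronglyMeasurable u μ ∧
        Integrable (fun t => ‖u t‖ ^ p) μ ∧
        Integrable (fun t => γ t * ψ (u t)) μ ∧
        (∫ t, γ t * ψ (u t) ∂μ) ≤ r * ∫ t, γ t ∂μ ∧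
        Integrable (fun t => γ t * φ (u t)) μ ∧
        x = ∫ t, γ t * φ (u t) ∂μ} with hSS
  set I := ∫ t, γ t ∂μ with hI
  have hγ0' : ∀ t, (0:ℝ) ≤ γ t := fun t => hγ0 t
  have hγae : 0 ≤ᵐ[μ] γ := Eventually.of_forall hγ0'
  have hIpos : 0 < I := by
    rw [hI, integral_pos_iff_support_of_nonneg hγ0 hγ1, pos_iff_ne_zero]
    intro hsupp
    apply hγne
    rw [EventuallyEq, ae_iff]
    simpa [Function.support] using hsupp
  have hRHS : sInf (φ '' {y : Y | ψ y = r}) = φ yhat := by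
    apply IsLeast.csInf_eq
    constructor
    · exact ⟨yhat, hψhat, rfl⟩
    · rintro v ⟨z, hz, rfl⟩
      have h1 := hmin z
      rw [mem_setOf_eq] at hz
      rw [hψhat, hz] at h1
      linarith
  -- lower bound
  set m0 := φ yhat + lam * ψ yhat with hm0
  rw [hψhat] at hm0
  have hlow : ∀ x ∈ SS, φ yhat * I ≤ x := by
    rintro x ⟨u, hum, hup, hψint, hψle, hφint, rfl⟩
    have hpt : ∀ t, m0 * γ t - lam * (γ t * ψ (u t)) ≤ γ t * φ (u t) := by
      intro t
      have h1 := hmin (u t)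
      have h2 := hγ0' t
      nlinarith
    have hint1 : Integrable (fun t => m0 * γ t - lam * (γ t * ψ (u t))) μ :=
      (hγ1.const_mul m0).sub (hψint.const_mul lam)
    have h3 := integral_mono hint1 hφint hpt
    rw [integral_sub (hγ1.const_mul m0) (hψint.const_mul lam), integral_const_mul,
      integral_const_mul] at h3
    have h4 : lam * ∫ t, γ t * ψ (u t) ∂μ ≤ lam * (r * I) :=
      mul_le_mul_of_nonneg_left hψle hlam.le
    nlinarith
  -- spanning sets
  have hSmeas : ∀ n, MeasurableSet (spanningSets μ n) := measurableSet_spanningSets μ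
  have hSmono : Monotone (spanningSets μ) := monotone_spanningSets μ
  have hSfin : ∀ n, μ (spanningSets μ n) < ⊤ := measure_spanningSets_lt_top μ
  set G : ℕ → ℝ := fun n => ∫ t in spanningSets μ n, γ t ∂μ with hG
  have hGten : Tendsto G atTop (nhds I) := by
    have h1 := tendsto_setIntegral_of_monotone hSmeas hSmono
      (by rw [iUnion_spanningSets]; exact hγ1.integrableOn)
    rwa [iUnion_spanningSets, setIntegral_univ] at h1
  have hGle : ∀ n, G n ≤ I := fun n => setIntegral_le_integral hγ1 hγae
  have hGmono : Monotone G := by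
    intro i j hij
    exact setIntegral_mono_set hγ1.integrableOn (ae_restrict_of_ae hγae)
      (HasSubset.Subset.eventuallyLE (hSmono hij))
  have hG0 : ∀ n, 0 ≤ G n := fun n => setIntegral_nonneg (hSmeas n) (fun t _ => hγ0' t)
  have hNex : ∀ n, ∃ N, n ≤ N ∧ (ψ 0 - r) * (I - G N) ≤ (r - ψ y₀) * (G N - G n) := by
    intro n
    rcases eq_or_lt_of_le (hGle n) with heq | hlt
    · exact ⟨n, le_refl n, by rw [← heq]; simp⟩
    · have hD : Tendsto (fun N => (r - ψ y₀) * (G N - G n) - (ψ 0 - r) * (I - G N)) atTop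
          (nhds ((r - ψ y₀) * (I - G n))) := by
        have h1 := ((hGten.sub_const (G n)).const_mul (r - ψ y₀)).sub
          (((tendsto_const_nhds (x := I)).sub hGten).const_mul (ψ 0 - r))
        simpa using h1
      have hpos : 0 < (r - ψ y₀) * (I - G n) := by
        have h2 : 0 < r - ψ y₀ := by linarith
        have h3 : 0 < I - G n := by linarith
        positivity
      obtain ⟨Nn, hN1, hN2⟩ := ((hD.eventually (eventually_gt_nhds hpos)).and
        (eventually_ge_atTop n)).exists
      exact ⟨Nn, hN2, by linarith⟩
  choose N hnN hNineq using hNex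
  set xv : ℕ → ℝ := fun n =>
    φ 0 * I + ((φ yhat - φ 0) * G n + (φ y₀ - φ 0) * (G (N n) - G n)) with hxv
  have hmem : ∀ n, xv n ∈ SS := by
    intro n
    have hQmeas : MeasurableSet (spanningSets μ (N n) \ spanningSets μ n) :=
      (hSmeas (N n)).diff (hSmeas n)
    have hPQ : Disjoint (spanningSets μ n) (spanningSets μ (N n) \ spanningSets μ n) :=
      disjoint_sdiff_right
    have hGQ : ∫ t in spanningSets μ (N n) \ spanningSets μ n, γ t ∂μ = G (N n) - G n :=
      integral_diff (hSmeas n) hγ1.integrableOn (hSmono (hnN n))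
    have hGP : ∫ t in spanningSets μ n, γ t ∂μ = G n := rfl
    have hψi := helper_int γ hγ1 (hSmeas n) hQmeas hPQ (ψ yhat) (ψ y₀) (ψ 0)
    have hφi := helper_int γ hγ1 (hSmeas n) hQmeas hPQ (φ yhat) (φ y₀) (φ 0)
    refine ⟨fun t => if t ∈ spanningSets μ n then yhat
      else if t ∈ spanningSets μ (N n) \ spanningSets μ n then y₀ else 0, ?_, ?_, ?_, ?_, ?_, ?_⟩
    case _ => -- measurability
      refine StronglyMeasurable.aestronglyMeasurable ?_
      exact StronglyMeasurable.ite (hSmeas n) stronglyMeasurable_const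
        (StronglyMeasurable.ite hQmeas stronglyMeasurable_const stronglyMeasurable_const)
    case _ => -- p-integrability
      have heqn : (fun t => ‖(if t ∈ spanningSets μ n then yhat
          else if t ∈ spanningSets μ (N n) \ spanningSets μ n then y₀ else 0 : Y)‖ ^ p)
          = fun t => (spanningSets μ n).indicator (fun _ => ‖yhat‖ ^ p) t
            + (spanningSets μ (N n) \ spanningSets μ n).indicator (fun _ => ‖y₀‖ ^ p) t := by
        funext t
        by_cases htP : t ∈ spanningSets μ n
        · have htQ : t ∉ spanningSets μ (N n) \ spanningSets μ n :=
            Set.disjoint_left.1 hPQ htP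
          simp [htP, htQ]
        · by_cases htQ : t ∈ spanningSets μ (N n) \ spanningSets μ n
          · simp [htP, htQ]
          · simp [htP, htQ, Real.zero_rpow hp.ne']
      rw [heqn]
      apply Integrable.add
      · rw [integrable_indicator_iff (hSmeas n)]
        exact integrableOn_const (hSfin n).ne
      · rw [integrable_indicator_iff hQmeas]
        exact integrableOn_const
          ((measure_mono diff_subset).trans_lt (hSfin (N n))).ne
    all_goals
      have heqψ : (fun t => γ t * ψ (if t ∈ spanningSets μ n then yhat
          else if t ∈ spanningSets μ (N n) \ spanningSets μ n then y₀ else 0))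
          = fun t => γ t * (if t ∈ spanningSets μ n then ψ yhat
            else if t ∈ spanningSets μ (N n) \ spanningSets μ n then ψ y₀ else ψ 0) := by
        funext t
        by_cases htP : t ∈ spanningSets μ n <;>
          by_cases htQ : t ∈ spanningSets μ (N n) \ spanningSets μ n <;> simp [htP, htQ]
      have heqφ : (fun t => γ t * φ (if t ∈ spanningSets μ n then yhat
          else if t ∈ spanningSets μ (N n) \ spanningSets μ n then y₀ else 0))
          = fun t => γ t * (if t ∈ spanningSets μ n then φ yhat
            else if t ∈ spanningSets μ (N n) \ spanningSets μ n then φ y₀ else φ 0) := by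
        funext t
        by_cases htP : t ∈ spanningSets μ n <;>
          by_cases htQ : t ∈ spanningSets μ (N n) \ spanningSets μ n <;> simp [htP, htQ]
    case _ => rw [heqψ]; exact hψi.1
    case _ =>
      rw [heqψ, hψi.2, hGQ, hGP, hψhat, ← hI]
      have h5 := hNineq n
      nlinarith [hG0 n]
    case _ => rw [heqφ]; exact hφi.1
    case _ =>
      rw [heqφ, hφi.2, hGQ, hGP, ← hI]
      simp only [hxv]
      ring
  have hSne : SS.Nonempty := ⟨xv 0, hmem 0⟩
  have hbdd : BddBelow SS := ⟨φ yhat * I, fun x hx => hlow x hx⟩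
  rw [hRHS]
  apply le_antisymm
  · have hGNten : Tendsto (fun n => G (N n)) atTop (nhds I) :=
      tendsto_of_tendsto_of_tendsto_of_le_of_le hGten tendsto_const_nhds
        (fun n => hGmono (hnN n)) (fun n => hGle (N n))
    have hxvten : Tendsto xv atTop (nhds (φ yhat * I)) := by
      have h1 := ((hGten.const_mul (φ yhat - φ 0)).add
        ((hGNten.sub hGten).const_mul (φ y₀ - φ 0))).const_add (φ 0 * I)
      have h2 : φ yhat * I = φ 0 * I + ((φ yhat - φ 0) * I + (φ y₀ - φ 0) * (I - I)) := by
        ring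
      rw [h2]
      exact h1
    exact ge_of_tendsto hxvten (Eventually.of_forall fun n => csInf_le hbdd (hmem n))
  · exact le_csInf hSne fun x hx => hlow x hx
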